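/- arXiv:1803.02414 — 3 statements merged into one kernel-verified Lean document; each statement's English description precedes it below -/
import Mathlib

section
/- Let H be a real Hilbert space with inner product (·,·) and norm ‖·‖, and let ⟨·,·⟩ be another inner product on H satisfying c₁‖v‖² ≤ ⟨v,v⟩ ≤ c₂‖v‖² for all v ∈ H and some constants 0 < c₁ ≤ c₂, with associated norm ‖v‖' = ⟨v,v⟩^{1/2}. Let e : H → ℝ and û ∈ H satisfy: e'(û) = 0, and there are δ₀ > 0 and 0 < α₀ ≤ M such that e is twice continuously Fréchet differentiable on B(û, δ₀) with α₀‖v‖² ≤ e''(u)(v,v) and |e''(u)(v,w)| ≤ M‖v‖‖w‖ for all u ∈ B(û, δ₀). For u ∈ H define the gradient g = g(u) with respect to ⟨·,·⟩ by ⟨g, v⟩ = e'(u)(v) for all v ∈ H. Then there exists κ₀ > 0 such that for every κ ∈ (0, κ₀) there is ε ∈ (0,1) with the property: for every u ∈ B(û, δ₀), the update ũ := u − κ g(u) satisfies ‖ũ − û‖' ≤ ε‖u − û‖'. -/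
/-!
Write `x = u - û` and `φ = e'(u)`. Integrating the Hessian along the segment from `û` to `u`
(where `e'(û) = 0`) gives `α₀‖x‖² ≤ φ x` and `‖φ‖ ≤ M‖x‖`. The Riesz representative `g` of `φ`
for `⟨·,·⟩` then satisfies `⟨g,g⟩ ≤ M²‖x‖²/c₁`, so expanding the square,
`‖x - κg‖'² = ‖x‖'² - 2κ φ x + κ²⟨g,g⟩ ≤ ‖x‖'² - γ‖x‖² ≤ (1 - γ/c₂)‖x‖'²`
with `γ = 2κα₀ - κ²M²/c₁`, which is positive for `κ < 2α₀c₁/M²`.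
-/

open Metric

section

variable {E : Type*} [NormedAddCommGroup E] [NormedSpace ℝ E]

theorem Convex.mul_norm_sub_sq_le_sub_apply_of_hasFDerivAt {s : Set E} (hs : Convex ℝ s)
    {f : E → E →L[ℝ] ℝ} {f' : E → E →L[ℝ] E →L[ℝ] ℝ} (hf : ∀ u ∈ s, HasFDerivAt f (f' u) u)
    {α : ℝ} (hcoer : ∀ u ∈ s, ∀ v, α * ‖v‖ ^ 2 ≤ f' u v v) {x y : E} (hx : x ∈ s)
    (hy : y ∈ s) :
    α * ‖y - x‖ ^ 2 ≤ (f y - f x) (y - x) := by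
  set z : ℝ → E := fun t => x + t • (y - x)
  have hz : ∀ t ∈ Set.Icc (0 : ℝ) 1, z t ∈ s := fun t ht => hs.add_smul_sub_mem hx hy ht
  have hderiv : ∀ t ∈ Set.Icc (0 : ℝ) 1,
      HasDerivAt (fun t => f (z t) (y - x)) (f' (z t) (y - x) (y - x)) t := by
    intro t ht
    have hline : HasDerivAt z (y - x) t := by
      simpa [z] using ((hasDerivAt_id t).smul_const (y - x)).const_add x
    simpa using ((hf _ (hz t ht)).comp_hasDerivAt t hline).clm_apply (hasDerivAt_const t (y - x))
  obtain ⟨c, hc, hslope⟩ := exists_hasDerivAt_eq_slope (fun t => f (z t) (y - x))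
    (fun t => f' (z t) (y - x) (y - x)) zero_lt_one
    (fun t ht => (hderiv t ht).continuousAt.continuousWithinAt)
    (fun t ht => hderiv t (Set.Ioo_subset_Icc_self ht))
  have hends : (fun t => f (z t) (y - x)) 1 - (fun t => f (z t) (y - x)) 0
      = (f y - f x) (y - x) := by
    simp [z]
  rw [hends, sub_zero, div_one] at hslope
  exact hslope ▸ hcoer _ (hz c (Set.Ioo_subset_Icc_self hc)) (y - x)

variable (p : E →L[ℝ] E →L[ℝ] ℝ) {c : ℝ} {φ : E →L[ℝ] ℝ} {g : E}

theorem apply_self_le_of_forall_apply_eq (hc : 0 < c) (hp : ∀ v, c * ‖v‖ ^ 2 ≤ p v v)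
    (hg : ∀ v, p g v = φ v) :
    p g g ≤ ‖φ‖ ^ 2 / c := by
  have hφg : p g g ≤ ‖φ‖ * ‖g‖ := (hg g).trans_le ((le_abs_self _).trans (φ.le_opNorm g))
  have hnorm : c * ‖g‖ ≤ ‖φ‖ := by
    rcases (norm_nonneg g).eq_or_lt with hzero | hpos
    · rw [← hzero, mul_zero]
      exact norm_nonneg φ
    · exact le_of_mul_le_mul_right (by nlinarith [hp g]) hpos
  rw [le_div_iff₀ hc]
  calc p g g * c ≤ ‖φ‖ * (c * ‖g‖) := by nlinarith
    _ ≤ ‖φ‖ ^ 2 := by nlinarith [norm_nonneg φ]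

theorem apply_sub_smul_self_le (hpsymm : ∀ v w, p v w = p w v) (hc : 0 < c)
    (hp : ∀ v, c * ‖v‖ ^ 2 ≤ p v v) (hg : ∀ v, p g v = φ v) {x : E} {α M κ : ℝ}
    (hκ : 0 ≤ κ) (hα : α * ‖x‖ ^ 2 ≤ φ x) (hM : ‖φ‖ ≤ M * ‖x‖) :
    p (x - κ • g) (x - κ • g) ≤ p x x - (2 * κ * α - κ ^ 2 * M ^ 2 / c) * ‖x‖ ^ 2 := by
  have hexpand : p (x - κ • g) (x - κ • g) = p x x - 2 * κ * φ x + κ ^ 2 * p g g := by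
    simp only [map_sub, map_smul, sub_apply, smul_apply, smul_eq_mul, hpsymm x g, hg x]
    ring
  have hgg : p g g ≤ M ^ 2 * ‖x‖ ^ 2 / c := by
    calc p g g ≤ ‖φ‖ ^ 2 / c := apply_self_le_of_forall_apply_eq p hc hp hg
      _ ≤ M ^ 2 * ‖x‖ ^ 2 / c := by
        rw [← mul_pow]
        gcongr
  rw [hexpand]
  have hgg' : κ ^ 2 * p g g ≤ κ ^ 2 * (M ^ 2 * ‖x‖ ^ 2 / c) := by gcongr
  have hα' : 2 * κ * (α * ‖x‖ ^ 2) ≤ 2 * κ * φ x := by gcongr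
  have : κ ^ 2 * (M ^ 2 * ‖x‖ ^ 2 / c) = κ ^ 2 * M ^ 2 / c * ‖x‖ ^ 2 := by ring
  linarith

end

theorem exists_pos_lt_one_le_sq {a : ℝ} (ha : a < 1) : ∃ ε : ℝ, 0 < ε ∧ ε < 1 ∧ a ≤ ε ^ 2 := by
  have hnonneg : (0 : ℝ) ≤ max a (1 / 2) := le_max_of_le_right (by norm_num)
  refine ⟨Real.sqrt (max a (1 / 2)), Real.sqrt_pos.2 (lt_max_of_lt_right (by norm_num)), ?_, ?_⟩
  · rw [Real.sqrt_lt' one_pos, one_pow]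
    exact max_lt ha (by norm_num)
  · rw [Real.sq_sqrt hnonneg]
    exact le_max_left _ _

theorem gradient_method_equivalent_inner_product_general
    {H : Type*} [NormedAddCommGroup H] [InnerProductSpace ℝ H]
    (p : H →L[ℝ] H →L[ℝ] ℝ) (c₁ c₂ : ℝ) (hc₁ : 0 < c₁) (hc₁₂ : c₁ ≤ c₂)
    (hpsymm : ∀ v w : H, p v w = p w v)
    (hplow : ∀ v : H, c₁ * ‖v‖ ^ 2 ≤ p v v)
    (hphigh : ∀ v : H, p v v ≤ c₂ * ‖v‖ ^ 2)
    (e : H → ℝ) (uh : H) (δ₀ α₀ M : ℝ)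
    (hδ₀ : 0 < δ₀) (hα₀ : 0 < α₀) (hα₀M : α₀ ≤ M)
    (hcrit : fderiv ℝ e uh = 0)
    (e'' : H → H →L[ℝ] H →L[ℝ] ℝ)
    (he'' : ∀ u ∈ Metric.ball uh δ₀, HasFDerivAt (fun x => fderiv ℝ e x) (e'' u) u)
    (hcoer : ∀ u ∈ Metric.ball uh δ₀, ∀ v : H, α₀ * ‖v‖ ^ 2 ≤ e'' u v v)
    (hbdd : ∀ u ∈ Metric.ball uh δ₀, ∀ v w : H, |e'' u v w| ≤ M * ‖v‖ * ‖w‖) :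
    ∃ κ₀ > 0, ∀ κ : ℝ, 0 < κ → κ < κ₀ → ∃ ε : ℝ, 0 < ε ∧ ε < 1 ∧
      ∀ u ∈ Metric.ball uh δ₀, ∀ g : H, (∀ v : H, p g v = fderiv ℝ e u v) →
        Real.sqrt (p ((u - κ • g) - uh) ((u - κ • g) - uh)) ≤
          ε * Real.sqrt (p (u - uh) (u - uh)) := by
  have hM : 0 < M := hα₀.trans_le hα₀M
  have hc₂ : 0 < c₂ := hc₁.trans_le hc₁₂
  refine ⟨2 * α₀ * c₁ / M ^ 2, by positivity, fun κ hκ hκ₀ => ?_⟩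
  set γ := 2 * κ * α₀ - κ ^ 2 * M ^ 2 / c₁
  have hγ : 0 < γ := by
    rw [lt_div_iff₀ (by positivity)] at hκ₀
    have : κ ^ 2 * M ^ 2 / c₁ < 2 * κ * α₀ := by
      rw [div_lt_iff₀ hc₁]
      nlinarith
    linarith
  obtain ⟨ε, hε₀, hε₁, hε⟩ := exists_pos_lt_one_le_sq (sub_lt_self 1 (div_pos hγ hc₂))
  refine ⟨ε, hε₀, hε₁, fun u hu g hg => ?_⟩
  have hcenter : uh ∈ ball uh δ₀ := mem_ball_self hδ₀
  have hstrong : α₀ * ‖u - uh‖ ^ 2 ≤ fderiv ℝ e u (u - uh) := by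
    simpa [hcrit] using
      (convex_ball uh δ₀).mul_norm_sub_sq_le_sub_apply_of_hasFDerivAt he'' hcoer hcenter hu
  have hlip : ‖fderiv ℝ e u‖ ≤ M * ‖u - uh‖ := by
    simpa [hcrit] using (convex_ball uh δ₀).norm_image_sub_le_of_norm_hasFDerivWithin_le
      (fun v hv => (he'' v hv).hasFDerivWithinAt)
      (fun v hv => ContinuousLinearMap.opNorm_le_bound₂ _ hM.le (hbdd v hv)) hcenter hu
  have hdecay : p (u - uh - κ • g) (u - uh - κ • g) ≤ ε ^ 2 * p (u - uh) (u - uh) :=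
    calc p (u - uh - κ • g) (u - uh - κ • g) ≤ p (u - uh) (u - uh) - γ * ‖u - uh‖ ^ 2 :=
          apply_sub_smul_self_le p hpsymm hc₁ hplow hg hκ.le hstrong hlip
      _ ≤ (1 - γ / c₂) * p (u - uh) (u - uh) := by
          have := mul_le_mul_of_nonneg_left (hphigh (u - uh)) (div_pos hγ hc₂).le
          rw [← mul_assoc, div_mul_cancel₀ γ hc₂.ne'] at this
          linarith
      _ ≤ ε ^ 2 * p (u - uh) (u - uh) := by
          gcongr
          exact (mul_nonneg hc₁.le (sq_nonneg _)).trans (hplow _)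
  rw [sub_right_comm, ← Real.sqrt_sq hε₀.le, ← Real.sqrt_mul (sq_nonneg ε)]
  exact Real.sqrt_le_sqrt hdecay

/-- Linear convergence of the gradient method when the gradient is computed with
respect to an equivalent inner product `p` on the Hilbert space `H`: for all small
enough step sizes `κ` there is a contraction factor `ε ∈ (0,1)` in the `p`-norm. -/
theorem gradient_method_equivalent_inner_product
    {H : Type*} [NormedAddCommGroup H] [InnerProductSpace ℝ H] [CompleteSpace H]
    (p : H →L[ℝ] H →L[ℝ] ℝ) (c₁ c₂ : ℝ) (hc₁ : 0 < c₁) (hc₁₂ : c₁ ≤ c₂)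
    (hpsymm : ∀ v w : H, p v w = p w v)
    (hplow : ∀ v : H, c₁ * ‖v‖ ^ 2 ≤ p v v)
    (hphigh : ∀ v : H, p v v ≤ c₂ * ‖v‖ ^ 2)
    (e : H → ℝ) (uh : H) (δ₀ α₀ M : ℝ)
    (hδ₀ : 0 < δ₀) (hα₀ : 0 < α₀) (hα₀M : α₀ ≤ M)
    (hcrit : fderiv ℝ e uh = 0)
    (hC2 : ContDiffOn ℝ 2 e (Metric.ball uh δ₀))
    (e'' : H → H →L[ℝ] H →L[ℝ] ℝ)
    (he'' : ∀ u ∈ Metric.ball uh δ₀, HasFDerivAt (fun x => fderiv ℝ e x) (e'' u) u)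
    (hcoer : ∀ u ∈ Metric.ball uh δ₀, ∀ v : H, α₀ * ‖v‖ ^ 2 ≤ e'' u v v)
    (hbdd : ∀ u ∈ Metric.ball uh δ₀, ∀ v w : H, |e'' u v w| ≤ M * ‖v‖ * ‖w‖) :
    ∃ κ₀ > 0, ∀ κ : ℝ, 0 < κ → κ < κ₀ → ∃ ε : ℝ, 0 < ε ∧ ε < 1 ∧
      ∀ u ∈ Metric.ball uh δ₀, ∀ g : H, (∀ v : H, p g v = fderiv ℝ e u v) →
        Real.sqrt (p ((u - κ • g) - uh) ((u - κ • g) - uh)) ≤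
          ε * Real.sqrt (p (u - uh) (u - uh)) :=
  gradient_method_equivalent_inner_product_general p c₁ c₂ hc₁ hc₁₂ hpsymm hplow hphigh e uh δ₀ α₀ M
    hδ₀ hα₀ hα₀M hcrit e'' he'' hcoer hbdd
end

section
/- Let H be a real Hilbert space, û ∈ H, δ > 0, and e : H → ℝ three times continuously Fréchet differentiable on B(û, δ) with e'(û) = 0, satisfying for all u ∈ B(û, δ) and v, w ∈ H: e''(u)(v,v) ≥ m‖v‖², |e''(u)(v,w)| ≤ M‖v‖‖w‖, and ‖e'''(u)‖ ≤ K, where 0 < m ≤ M and K ≥ 0. Then there exists C > 0 (one may take C = √(M/m)·K/(2m)) such that for every u ∈ B(û, δ), every κ > 0, every closed subspace T ⊆ H, and every g ∈ H satisfying e''(u)(κ g, t) = e'(u)(t) for all t ∈ T, the update ũ := u − κ g satisfies ‖P(ũ − û)‖ ≤ C‖u − û‖², where P is the e''(u)-orthogonal projection of H onto T. -/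
set_option maxSynthPendingDepth 2

/-!
By second-order Taylor expansion of `e'` around `u` and `e'(û) = 0`, the residual
`r = e'(u) + e''(u)(û - u)` has norm at most `K/2 ‖u - û‖²`. Galerkin orthogonality of `P` and the
Newton condition on `κ g` give `e''(u)(p, p) = -r(p)` for the projected error `p`, so coercivity
yields `‖p‖ ≤ ‖r‖ / m`.
-/

open Set

section

variable {E G : Type*} [NormedAddCommGroup E] [NormedSpace ℝ E]
  [NormedAddCommGroup G] [NormedSpace ℝ G]

theorem norm_sub_sub_deriv_le_of_norm_deriv2_le {γ γ' γ'' : ℝ → G} {C : ℝ}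
    (hγ : ∀ t ∈ Icc (0 : ℝ) 1, HasDerivAt γ (γ' t) t)
    (hγ' : ∀ t ∈ Icc (0 : ℝ) 1, HasDerivAt γ' (γ'' t) t)
    (hC : ∀ t ∈ Ico (0 : ℝ) 1, ‖γ'' t‖ ≤ C) :
    ‖γ 1 - γ 0 - γ' 0‖ ≤ C / 2 := by
  -- `Φ' s = (1 - s) • γ'' s`, and `∫₀¹ (1 - s) ds = 1 / 2`.
  set Φ : ℝ → G := fun s => γ s + (1 - s) • γ' s
  have hΦ : ∀ s ∈ Icc (0 : ℝ) 1, HasDerivAt (fun s => Φ s - Φ 0) ((1 - s) • γ'' s) s := by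
    intro s hs
    have h := ((hγ s hs).add (((hasDerivAt_id s).const_sub 1).smul (hγ' s hs))).sub_const (Φ 0)
    refine h.congr_deriv ?_
    simp only [id]
    module
  have hB : ∀ s, HasDerivAt (fun s : ℝ => C * (s - s ^ 2 / 2)) (C * (1 - s)) s := fun s => by
    refine (((hasDerivAt_id s).sub ((hasDerivAt_pow 2 s).div_const 2)).const_mul C).congr_deriv ?_
    ring
  have h := image_norm_le_of_norm_deriv_right_le_deriv_boundary
    (fun s hs => (hΦ s hs).continuousAt.continuousWithinAt)
    (fun s hs => (hΦ s (Ico_subset_Icc_self hs)).hasDerivWithinAt) (by simp) hB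
    (fun s hs => by
      rw [norm_smul, Real.norm_of_nonneg (by linarith [hs.2]), mul_comm C]
      exact mul_le_mul_of_nonneg_left (hC s hs) (by linarith [hs.2]))
    (right_mem_Icc.2 zero_le_one)
  convert h using 1
  · simp only [Φ, sub_self, zero_smul, add_zero, sub_zero, one_smul]
    abel_nf
  · ring

theorem Convex.norm_sub_sub_fderiv_le_of_norm_fderiv2_le {s : Set E} (hs : Convex ℝ s)
    {f : E → G} {f' : E → E →L[ℝ] G} {f'' : E → E →L[ℝ] E →L[ℝ] G} {K : ℝ}
    (hf : ∀ x ∈ s, HasFDerivAt f (f' x) x) (hf' : ∀ x ∈ s, HasFDerivAt f' (f'' x) x)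
    (hK : ∀ x ∈ s, ‖f'' x‖ ≤ K) {x y : E} (hx : x ∈ s) (hy : y ∈ s) :
    ‖f y - f x - f' x (y - x)‖ ≤ K / 2 * ‖y - x‖ ^ 2 := by
  set d := y - x
  have hseg : ∀ t ∈ Icc (0 : ℝ) 1, x + t • d ∈ s := fun t ht => hs.add_smul_sub_mem hx hy ht
  have hline : ∀ t : ℝ, HasDerivAt (fun t : ℝ => x + t • d) d t := fun t => by
    simpa using ((hasDerivAt_id t).smul_const d).const_add x
  have hγ' : ∀ t ∈ Icc (0 : ℝ) 1,
      HasDerivAt (fun t : ℝ => f' (x + t • d) d) (f'' (x + t • d) d d) t := fun t ht => by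
    have h1 : HasDerivAt (fun t : ℝ => f' (x + t • d)) (f'' (x + t • d) d) t :=
      (hf' _ (hseg t ht)).comp_hasDerivAt t (hline t)
    simpa using h1.clm_apply (hasDerivAt_const t d)
  have h := norm_sub_sub_deriv_le_of_norm_deriv2_le (C := K * ‖d‖ ^ 2)
    (fun t ht => (hf _ (hseg t ht)).comp_hasDerivAt t (hline t)) hγ'
    (fun t ht => by
      calc ‖f'' (x + t • d) d d‖ ≤ ‖f'' (x + t • d)‖ * ‖d‖ * ‖d‖ := (f'' _).le_opNorm₂ d d
        _ ≤ K * ‖d‖ * ‖d‖ := by gcongr; exact hK _ (hseg t (Ico_subset_Icc_self ht))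
        _ = K * ‖d‖ ^ 2 := by ring)
  convert h using 1
  · simp [d]
  · ring

theorem norm_le_opNorm_div_of_mul_sq_le_apply {ℓ : E →L[ℝ] ℝ} {m : ℝ} (hm : 0 < m) {p : E}
    (hp : m * ‖p‖ ^ 2 ≤ ℓ p) : ‖p‖ ≤ ‖ℓ‖ / m := by
  rw [le_div_iff₀ hm]
  rcases (norm_nonneg p).eq_or_lt with h0 | hpos
  · rw [← h0, zero_mul]
    exact norm_nonneg ℓ
  · have := hp.trans ((le_abs_self _).trans (ℓ.le_opNorm p))
    nlinarith

end

theorem projected_quadratic_error_estimate_general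
    {H : Type*} [NormedAddCommGroup H] [InnerProductSpace ℝ H]
    (e : H → ℝ) (uh : H) (δ m M K : ℝ)
    (hδ : 0 < δ) (hm : 0 < m) (hmM : m ≤ M) (hK : 0 ≤ K)
    (hcrit : fderiv ℝ e uh = 0)
    (e'' : H → H →L[ℝ] H →L[ℝ] ℝ)
    (e''' : H → H →L[ℝ] H →L[ℝ] H →L[ℝ] ℝ)
    (he'' : ∀ u ∈ Metric.ball uh δ, HasFDerivAt (fun x => fderiv ℝ e x) (e'' u) u)
    (he''' : ∀ u ∈ Metric.ball uh δ, HasFDerivAt e'' (e''' u) u)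
    (hcoer : ∀ u ∈ Metric.ball uh δ, ∀ v : H, m * ‖v‖ ^ 2 ≤ e'' u v v)
    (hK3 : ∀ u ∈ Metric.ball uh δ, ‖e''' u‖ ≤ K) :
    ∀ u ∈ Metric.ball uh δ, ∀ κ : ℝ, 0 < κ →
      ∀ T : Submodule ℝ H, IsClosed (T : Set H) →
      ∀ g : H, (∀ t ∈ T, e'' u (κ • g) t = fderiv ℝ e u t) →
      ∀ P : H → H, (∀ w : H, P w ∈ T ∧ ∀ t ∈ T, e'' u (w - P w) t = 0) →
        ‖P ((u - κ • g) - uh)‖ ≤ (Real.sqrt (M / m) * K / (2 * m)) * ‖u - uh‖ ^ 2 := by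
  intro u hu κ _ T _ g hg P hP
  obtain ⟨hpT, hperp⟩ := hP ((u - κ • g) - uh)
  set p := P ((u - κ • g) - uh)
  set r := fderiv ℝ e u + e'' u (uh - u)
  have hr : ‖r‖ ≤ K / 2 * ‖u - uh‖ ^ 2 := by
    have h := (convex_ball uh δ).norm_sub_sub_fderiv_le_of_norm_fderiv2_le he'' he''' hK3 hu
      (Metric.mem_ball_self hδ)
    rwa [hcrit, zero_sub, sub_eq_add_neg, ← neg_add, norm_neg, norm_sub_rev] at h
  have hpp : e'' u p p = (-r) p := by
    have h := hperp p hpT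
    rw [map_sub, sub_apply, sub_eq_zero] at h
    rw [← h, show u - κ • g - uh = -(uh - u) - κ • g by abel, map_sub, map_neg,
      sub_apply, hg p hpT]
    simp only [r, neg_apply, add_apply]
    ring
  have hp : ‖p‖ ≤ ‖r‖ / m := by
    have hcoer_p := hcoer u hu p
    rw [hpp] at hcoer_p
    simpa only [norm_neg] using norm_le_opNorm_div_of_mul_sq_le_apply hm hcoer_p
  have hM : 1 ≤ Real.sqrt (M / m) := Real.one_le_sqrt.2 ((one_le_div hm).2 hmM)
  calc ‖p‖ ≤ ‖r‖ / m := hp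
    _ ≤ K / 2 * ‖u - uh‖ ^ 2 / m := by gcongr
    _ ≤ Real.sqrt (M / m) * K / (2 * m) * ‖u - uh‖ ^ 2 := by
      rw [show K / 2 * ‖u - uh‖ ^ 2 / m = 1 * K / (2 * m) * ‖u - uh‖ ^ 2 by ring]
      gcongr

/-- Quadratic projected-error estimate for the optimized-inner-product gradient method:
if `κ g` matches the Newton step weakly on a closed subspace `T`
(i.e. `e''(u)(κ g, t) = e'(u)(t)` for all `t ∈ T`), then the `e''(u)`-orthogonal
projection onto `T` of the error of the update `u - κ g` is quadratically small. -/
theorem projected_quadratic_error_estimate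
    {H : Type*} [NormedAddCommGroup H] [InnerProductSpace ℝ H] [CompleteSpace H]
    (e : H → ℝ) (uh : H) (δ m M K : ℝ)
    (hδ : 0 < δ) (hm : 0 < m) (hmM : m ≤ M) (hK : 0 ≤ K)
    (hC3 : ContDiffOn ℝ 3 e (Metric.ball uh δ))
    (hcrit : fderiv ℝ e uh = 0)
    (e'' : H → H →L[ℝ] H →L[ℝ] ℝ)
    (e''' : H → H →L[ℝ] H →L[ℝ] H →L[ℝ] ℝ)
    (he'' : ∀ u ∈ Metric.ball uh δ, HasFDerivAt (fun x => fderiv ℝ e x) (e'' u) u)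
    (he''' : ∀ u ∈ Metric.ball uh δ, HasFDerivAt e'' (e''' u) u)
    (hsymm : ∀ u ∈ Metric.ball uh δ, ∀ v w : H, e'' u v w = e'' u w v)
    (hcoer : ∀ u ∈ Metric.ball uh δ, ∀ v : H, m * ‖v‖ ^ 2 ≤ e'' u v v)
    (hbdd : ∀ u ∈ Metric.ball uh δ, ∀ v w : H, |e'' u v w| ≤ M * ‖v‖ * ‖w‖)
    (hK3 : ∀ u ∈ Metric.ball uh δ, ‖e''' u‖ ≤ K) :
    ∀ u ∈ Metric.ball uh δ, ∀ κ : ℝ, 0 < κ →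
      ∀ T : Submodule ℝ H, IsClosed (T : Set H) →
      ∀ g : H, (∀ t ∈ T, e'' u (κ • g) t = fderiv ℝ e u t) →
      ∀ P : H → H, (∀ w : H, P w ∈ T ∧ ∀ t ∈ T, e'' u (w - P w) t = 0) →
        ‖P ((u - κ • g) - uh)‖ ≤ (Real.sqrt (M / m) * K / (2 * m)) * ‖u - uh‖ ^ 2 :=
  projected_quadratic_error_estimate_general e uh δ m M K hδ hm hmM hK hcrit e'' e''' he'' he'''
    hcoer hK3
end

section
/- Let H be a real Hilbert space and q a continuous symmetric bilinear form on H with m‖v‖² ≤ q(v,v) and |q(v,w)| ≤ M‖v‖‖w‖ for all v,w ∈ H, where 0 < m ≤ M. Let T ⊆ H be a closed subspace, P the q-orthogonal projection onto T, and L ∈ H' a continuous linear functional. Suppose h ∈ H satisfies q(h, v) = L(v) for all v ∈ H, and suppose κ > 0 and g ∈ H satisfy q(κ g, t) = L(t) for all t ∈ T. Then P(h) = P(κ g). -/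
/-! Both projections are elements of `T` on which `q(·, t)` agrees with `L` for every `t ∈ T`,
and by coercivity of `q` there is at most one such element of `T`. -/

namespace ContinuousLinearMap

variable {E : Type*} [NormedAddCommGroup E] [NormedSpace ℝ E] {q : E →L[ℝ] E →L[ℝ] ℝ} {m : ℝ}

theorem eq_zero_of_coercive_of_apply_self_eq_zero (hm : 0 < m)
    (hcoer : ∀ v : E, m * ‖v‖ ^ 2 ≤ q v v) {v : E} (hv : q v v = 0) : v = 0 := by
  have hnorm : m * ‖v‖ ^ 2 ≤ 0 := hv ▸ hcoer v
  have : ‖v‖ ^ 2 ≤ 0 := nonpos_of_mul_nonpos_right hnorm hm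
  exact norm_eq_zero.mp (pow_eq_zero_iff two_ne_zero |>.mp (le_antisymm this (sq_nonneg _)))

theorem eq_of_coercive_of_forall_mem_apply_eq (hm : 0 < m)
    (hcoer : ∀ v : E, m * ‖v‖ ^ 2 ≤ q v v) {T : Submodule ℝ E} {a b : E} (ha : a ∈ T)
    (hb : b ∈ T) (hab : ∀ t ∈ T, q a t = q b t) : a = b := by
  refine sub_eq_zero.mp (eq_zero_of_coercive_of_apply_self_eq_zero hm hcoer ?_)
  rw [map_sub q, sub_apply, hab _ (T.sub_mem ha hb), sub_self]

theorem proj_eq_of_forall_mem_apply_eq (hm : 0 < m) (hcoer : ∀ v : E, m * ‖v‖ ^ 2 ≤ q v v)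
    {T : Submodule ℝ E} {P : E → E} (hP : ∀ w : E, P w ∈ T ∧ ∀ t ∈ T, q (w - P w) t = 0)
    {w w' : E} (hww' : ∀ t ∈ T, q w t = q w' t) : P w = P w' := by
  have apply_proj (w : E) {t : E} (ht : t ∈ T) : q (P w) t = q w t := by
    have := (hP w).2 t ht
    rwa [map_sub q, sub_apply, sub_eq_zero, eq_comm] at this
  refine eq_of_coercive_of_forall_mem_apply_eq hm hcoer (hP w).1 (hP w').1 fun t ht => ?_
  rw [apply_proj w ht, apply_proj w' ht, hww' t ht]

end ContinuousLinearMap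

theorem projection_of_newton_step_eq_projection_of_scaled_gradient_general
    {H : Type*} [NormedAddCommGroup H] [InnerProductSpace ℝ H]
    (q : H →L[ℝ] H →L[ℝ] ℝ) (m : ℝ) (hm : 0 < m)
    (hcoer : ∀ v : H, m * ‖v‖ ^ 2 ≤ q v v)
    (T : Submodule ℝ H)
    (P : H → H) (hP : ∀ w : H, P w ∈ T ∧ ∀ t ∈ T, q (w - P w) t = 0)
    (L : H →L[ℝ] ℝ) (h : H) (hh : ∀ v : H, q h v = L v)
    (κ : ℝ) (g : H) (hg : ∀ t ∈ T, q (κ • g) t = L t) :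
    P h = P (κ • g) :=
  ContinuousLinearMap.proj_eq_of_forall_mem_apply_eq hm hcoer hP fun t ht => by
    rw [hh t, hg t ht]

/-- If `h` solves `q(h,·) = L` on all of `H` and `κ g` solves the same equation tested
only against a closed subspace `T`, then the `q`-orthogonal projections onto `T` of
`h` and of `κ g` coincide. -/
theorem projection_of_newton_step_eq_projection_of_scaled_gradient
    {H : Type*} [NormedAddCommGroup H] [InnerProductSpace ℝ H] [CompleteSpace H]
    (q : H →L[ℝ] H →L[ℝ] ℝ) (m M : ℝ) (hm : 0 < m) (hmM : m ≤ M)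
    (hsymm : ∀ v w : H, q v w = q w v)
    (hcoer : ∀ v : H, m * ‖v‖ ^ 2 ≤ q v v)
    (hbdd : ∀ v w : H, |q v w| ≤ M * ‖v‖ * ‖w‖)
    (T : Submodule ℝ H) (hT : IsClosed (T : Set H))
    (P : H → H) (hP : ∀ w : H, P w ∈ T ∧ ∀ t ∈ T, q (w - P w) t = 0)
    (L : H →L[ℝ] ℝ) (h : H) (hh : ∀ v : H, q h v = L v)
    (κ : ℝ) (hκ : 0 < κ) (g : H) (hg : ∀ t ∈ T, q (κ • g) t = L t) :
    P h = P (κ • g) :=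
  projection_of_newton_step_eq_projection_of_scaled_gradient_general q m hm hcoer T P hP L h hh κ g
    hg
end
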